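/- arXiv:1011.2923 — 5 statements merged into one kernel-verified Lean document; each statement's English description precedes it below -/
import Mathlib

section
/- Let 𝒜 be an associative algebra, A ∈ 𝒜, and [X,Y,Z]_A the homotope triple bracket. Then for all U,V ∈ 𝒜, the operator D := [U,V,·]_A is a derivation of the triple product: D[X,Y,Z]_A = [DX,Y,Z]_A + [X,DY,Z]_A + [X,Y,DZ]_A. Hence (𝒜, [·,·,·]_A) is a Lie triple system. -/
/-!
`[X, Y, Z]_A` is the double commutator `⁅⁅X, Y⁆, Z⁆` for the bracket `⁅X, Y⁆ = X * A * Y - Y * A * X`,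
the commutator of the associative homotope product `X * A * Y`. In any Lie ring the double commutator
is a Lie triple system: antisymmetry is skew-symmetry of the bracket, the cyclic identity is the Jacobi
identity, and `⁅W, ·⁆` is a derivation of `⁅⁅·, ·⁆, ·⁆` because it is a derivation of `⁅·, ·⁆`.
-/

structure IsLieTripleSystem {M : Type*} [AddCommGroup M] (tb : M → M → M → M) : Prop where
  antisymm : ∀ X Y Z, tb X Y Z = -tb Y X Z
  cyclic : ∀ X Y Z, tb X Y Z + tb Y Z X + tb Z X Y = 0
  derivation : ∀ U V X Y Z,
    tb U V (tb X Y Z) = tb (tb U V X) Y Z + tb X (tb U V Y) Z + tb X Y (tb U V Z)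

section LieRing

variable {L : Type*} [LieRing L]

theorem leibniz_lie_lie (w x y z : L) :
    ⁅w, ⁅⁅x, y⁆, z⁆⁆ = ⁅⁅⁅w, x⁆, y⁆, z⁆ + ⁅⁅x, ⁅w, y⁆⁆, z⁆ + ⁅⁅x, y⁆, ⁅w, z⁆⁆ := by
  rw [leibniz_lie, leibniz_lie w x y, add_lie]

theorem LieRing.isLieTripleSystem_lie_lie : IsLieTripleSystem fun x y z : L => ⁅⁅x, y⁆, z⁆ where
  antisymm x y z := by rw [← neg_lie, lie_skew]
  cyclic x y z := by
    rw [← lie_skew, ← lie_skew ⁅y, z⁆, ← lie_skew ⁅z, x⁆, ← neg_add, ← neg_add, lie_jacobi, neg_zero]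
  derivation _ _ := leibniz_lie_lie _

end LieRing

section Homotope

variable {R : Type*} [NonUnitalRing R]

def homotopeTripleBracket (A X Y Z : R) : R :=
  X * A * Y * A * Z + Z * A * Y * A * X - (Y * A * X * A * Z + Z * A * X * A * Y)

abbrev homotopeLieRing (A : R) : LieRing R where
  bracket X Y := X * A * Y - Y * A * X
  add_lie X Y Z := by simp only [add_mul, mul_add]; abel
  lie_add X Y Z := by simp only [add_mul, mul_add]; abel
  lie_self X := sub_self (X * A * X)
  leibniz_lie X Y Z := by simp only [sub_mul, mul_sub, mul_assoc]; abel

theorem homotopeLieRing_lie_lie (A X Y Z : R) :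
    letI := homotopeLieRing A
    ⁅⁅X, Y⁆, Z⁆ = homotopeTripleBracket A X Y Z := by
  change (X * A * Y - Y * A * X) * A * Z - Z * A * (X * A * Y - Y * A * X) = _
  simp only [homotopeTripleBracket, sub_mul, mul_sub, mul_assoc]
  abel

theorem isLieTripleSystem_homotopeTripleBracket (A : R) :
    IsLieTripleSystem (homotopeTripleBracket A) := by
  let := homotopeLieRing A
  have h := LieRing.isLieTripleSystem_lie_lie (L := R)
  simp only [homotopeLieRing_lie_lie] at h
  exact h

end Homotope

/-- For all `U, V`, the operator `D = [U,V,·]_A` is a derivation of the homotope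
triple bracket; together with antisymmetry and the cyclic identity this means
`(𝒜, [·,·,·]_A)` is a Lie triple system. -/
theorem homotope_triple_lts {𝒜 : Type*} [Ring 𝒜] (A : 𝒜)
    (tb : 𝒜 → 𝒜 → 𝒜 → 𝒜)
    (htb : ∀ X Y Z, tb X Y Z =
      (X * A * Y * A * Z + Z * A * Y * A * X) -
      (Y * A * X * A * Z + Z * A * X * A * Y)) :
    (∀ X Y Z, tb X Y Z = - tb Y X Z) ∧
    (∀ X Y Z, tb X Y Z + tb Y Z X + tb Z X Y = 0) ∧
    (∀ U V X Y Z, tb U V (tb X Y Z) =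
      tb (tb U V X) Y Z + tb X (tb U V Y) Z + tb X Y (tb U V Z)) := by
  obtain rfl : tb = homotopeTripleBracket A := funext₃ htb
  obtain ⟨antisymm, cyclic, derivation⟩ := isLieTripleSystem_homotopeTripleBracket A
  exact ⟨antisymm, cyclic, derivation⟩
end

section
/- Let 𝒜 be an associative algebra with two commuting involutions τ and τ̃. If A belongs to any one of the four joint eigenspaces 𝒜^{(ε,δ)} = {X : τ(X) = εX, τ̃(X) = δX} (ε, δ ∈ {±1}), then all four joint eigenspaces are closed under the homotope triple bracket [X,Y,Z]_A. -/
/-!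
An additive antiautomorphism `f` reverses the five-fold product `U * A * V * A * W`, and the
four terms of `[X,Y,Z]_A` are permuted by this reversal: the two terms with plus sign are
swapped, and so are the two with minus sign. If `X, Y, Z` are `a`-eigenvectors of `f` and `A` is
a `c`-eigenvector, the reversed product picks up the sign `a³c² = a`, so the bracket is again an
`a`-eigenvector. Applying this to `τ` and to `σ` separately gives the theorem.
-/

section HomotopeBracket

variable {R : Type*} [Ring R]

def homotopeBracket (A X Y Z : R) : R :=
  (X * A * Y * A * Z + Z * A * Y * A * X) - (Y * A * X * A * Z + Z * A * X * A * Y)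

variable (f : R → R) (hadd : ∀ x y, f (x + y) = f x + f y)
  (hanti : ∀ x y, f (x * y) = f y * f x) {a c : ℤ} {A : R}

include hanti in
theorem map_five_mul_of_eigen (ha : a * a = 1) (hc : c * c = 1) (hA : f A = c • A)
    {U V W : R} (hU : f U = a • U) (hV : f V = a • V) (hW : f W = a • W) :
    f (U * A * V * A * W) = a • (W * A * V * A * U) := by
  have hsign : a * c * a * c * a = a := by
    linear_combination (a * c * c) * ha + a * hc
  rw [hanti, hanti, hanti, hanti, hU, hV, hW, hA]
  simp only [smul_mul_assoc, mul_smul_comm, smul_smul, hsign]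
  noncomm_ring

include hadd hanti in
theorem map_homotopeBracket_of_eigen (ha : a * a = 1) (hc : c * c = 1) (hA : f A = c • A)
    {X Y Z : R} (hX : f X = a • X) (hY : f Y = a • Y) (hZ : f Z = a • Z) :
    f (homotopeBracket A X Y Z) = a • homotopeBracket A X Y Z := by
  have hsub : ∀ x y, f (x - y) = f x - f y := map_sub (AddMonoidHom.mk' f hadd)
  have reverse := @map_five_mul_of_eigen _ _ f hanti _ _ _ ha hc hA
  rw [homotopeBracket, hsub, hadd, hadd, reverse hX hY hZ, reverse hZ hY hX, reverse hY hX hZ,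
    reverse hZ hX hY, smul_sub, smul_add, smul_add]
  abel

end HomotopeBracket

theorem joint_eigenspaces_closed_triple_general {𝒜 : Type*} [Ring 𝒜]
    (τ σ : 𝒜 → 𝒜)
    (hτadd : ∀ x y, τ (x + y) = τ x + τ y)
    (hτanti : ∀ x y, τ (x * y) = τ y * τ x)
    (hσadd : ∀ x y, σ (x + y) = σ x + σ y)
    (hσanti : ∀ x y, σ (x * y) = σ y * σ x)
    (A : 𝒜)
    (hA : ∃ s t : ℤ, (s = 1 ∨ s = -1) ∧ (t = 1 ∨ t = -1) ∧
      τ A = s • A ∧ σ A = t • A)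
    (tb : 𝒜 → 𝒜 → 𝒜 → 𝒜)
    (htb : ∀ X Y Z, tb X Y Z =
      (X * A * Y * A * Z + Z * A * Y * A * X) -
      (Y * A * X * A * Z + Z * A * X * A * Y)) :
    ∀ s t : ℤ, (s = 1 ∨ s = -1) → (t = 1 ∨ t = -1) →
      ∀ X Y Z : 𝒜,
        (τ X = s • X ∧ σ X = t • X) →
        (τ Y = s • Y ∧ σ Y = t • Y) →
        (τ Z = s • Z ∧ σ Z = t • Z) →
        τ (tb X Y Z) = s • tb X Y Z ∧ σ (tb X Y Z) = t • tb X Y Z := by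
  have sq_eq_one {u : ℤ} (hu : u = 1 ∨ u = -1) : u * u = 1 :=
    Int.isUnit_mul_self (Int.isUnit_iff.mpr hu)
  obtain ⟨sA, tA, hsA, htA, hτA, hσA⟩ := hA
  intro s t hs ht X Y Z hX hY hZ
  rw [htb]
  exact ⟨map_homotopeBracket_of_eigen τ hτadd hτanti (sq_eq_one hs) (sq_eq_one hsA) hτA
      hX.1 hY.1 hZ.1,
    map_homotopeBracket_of_eigen σ hσadd hσanti (sq_eq_one ht) (sq_eq_one htA) hσA
      hX.2 hY.2 hZ.2⟩

/-- If `A` lies in one of the four joint eigenspaces of two commuting involutions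
`τ, σ`, then all four joint eigenspaces are closed under the homotope triple
bracket `[X,Y,Z]_A`. -/
theorem joint_eigenspaces_closed_triple {𝒜 : Type*} [Ring 𝒜]
    (τ σ : 𝒜 → 𝒜)
    (hτadd : ∀ x y, τ (x + y) = τ x + τ y)
    (hτanti : ∀ x y, τ (x * y) = τ y * τ x)
    (hτinv : ∀ x, τ (τ x) = x)
    (hσadd : ∀ x y, σ (x + y) = σ x + σ y)
    (hσanti : ∀ x y, σ (x * y) = σ y * σ x)
    (hσinv : ∀ x, σ (σ x) = x)
    (hcomm : ∀ x, τ (σ x) = σ (τ x))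
    (A : 𝒜)
    (hA : ∃ s t : ℤ, (s = 1 ∨ s = -1) ∧ (t = 1 ∨ t = -1) ∧
      τ A = s • A ∧ σ A = t • A)
    (tb : 𝒜 → 𝒜 → 𝒜 → 𝒜)
    (htb : ∀ X Y Z, tb X Y Z =
      (X * A * Y * A * Z + Z * A * Y * A * X) -
      (Y * A * X * A * Z + Z * A * X * A * Y)) :
    ∀ s t : ℤ, (s = 1 ∨ s = -1) → (t = 1 ∨ t = -1) →
      ∀ X Y Z : 𝒜,
        (τ X = s • X ∧ σ X = t • X) →
        (τ Y = s • Y ∧ σ Y = t • Y) →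
        (τ Z = s • Z ∧ σ Z = t • Z) →
        τ (tb X Y Z) = s • tb X Y Z ∧ σ (tb X Y Z) = t • tb X Y Z :=
  joint_eigenspaces_closed_triple_general τ σ hτadd hτanti hσadd hσanti A hA tb htb
end

section
/- Let 𝒜 be a unital associative algebra and A ∈ 𝒜. Then the set G_A := {X ∈ 𝒜 : 1 − XA is invertible} is a group under the product X ∘_A Y := X + Y − XAY, with identity element 0 and inverse j_A(X) = −(1 − XA)^{-1} X. -/
/-!
The map `X ↦ 1 - X * A` turns `∘_A` into multiplication:
`1 - (X ∘_A Y) * A = (1 - X * A) * (1 - Y * A)`, so `G_A` is closed under `∘_A`.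
For `u = 1 - X * A` a unit, `X * A = 1 - u` gives `1 - j_A(X) * A = u⁻¹`, so `G_A` is closed
under `j_A`, and the inverse laws reduce to `u * u⁻¹ = 1 = u⁻¹ * u`.
-/

namespace CircProduct

variable {R : Type*} [Ring R] (A : R)

/-- The product `X ∘_A Y`. -/
def circ (X Y : R) : R := X + Y - X * A * Y

/-- The inverse `j_A(X)`, meaningful when `1 - X * A` is a unit. -/
noncomputable def circInv (X : R) : R := -(Ring.inverse (1 - X * A) * X)

theorem one_sub_circ_mul (X Y : R) :
    1 - circ A X Y * A = (1 - X * A) * (1 - Y * A) := by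
  unfold circ; noncomm_ring

theorem circ_assoc (X Y Z : R) : circ A (circ A X Y) Z = circ A X (circ A Y Z) := by
  unfold circ; noncomm_ring

@[simp]
theorem circ_zero (X : R) : circ A X 0 = X := by simp [circ]

@[simp]
theorem zero_circ (X : R) : circ A 0 X = X := by simp [circ]

variable {A}

theorem one_sub_circInv_mul {X : R} (hX : IsUnit (1 - X * A)) :
    1 - circInv A X * A = Ring.inverse (1 - X * A) := by
  obtain ⟨u, hu⟩ := hX
  have hXA : X * A = 1 - u := by rw [hu, sub_sub_cancel]
  calc 1 - circInv A X * A = 1 + ↑u⁻¹ * (X * A) := by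
        simp only [circInv, ← hu, Ring.inverse_unit, neg_mul, sub_neg_eq_add, mul_assoc]
    _ = Ring.inverse (1 - X * A) := by
        rw [← hu, Ring.inverse_unit, hXA, mul_sub, mul_one, Units.inv_mul, add_sub_cancel]

theorem circ_circInv {X : R} (hX : IsUnit (1 - X * A)) : circ A X (circInv A X) = 0 := by
  calc circ A X (circInv A X)
      = X - (1 - X * A) * Ring.inverse (1 - X * A) * X := by
        unfold circ circInv; noncomm_ring
    _ = 0 := by rw [Ring.mul_inverse_cancel _ hX, one_mul, sub_self]

theorem circInv_circ {X : R} (hX : IsUnit (1 - X * A)) : circ A (circInv A X) X = 0 := by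
  calc circ A (circInv A X) X
      = X - Ring.inverse (1 - X * A) * (1 - X * A) * X := by
        unfold circ circInv; noncomm_ring
    _ = 0 := by rw [Ring.inverse_mul_cancel _ hX, one_mul, sub_self]

end CircProduct

open CircProduct in
/-- `G_A = {X : 1 - XA invertible}` is a group under `X ∘_A Y = X + Y - XAY`,
with identity `0` and inverse `j_A(X) = -(1 - XA)⁻¹ X`. -/
theorem GA_group {𝒜 : Type*} [Ring 𝒜] (A : 𝒜)
    (G : Set 𝒜) (hG : G = {X : 𝒜 | IsUnit (1 - X * A)})
    (m : 𝒜 → 𝒜 → 𝒜) (hm : ∀ X Y, m X Y = X + Y - X * A * Y)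
    (j : 𝒜 → 𝒜) (hj : ∀ X, j X = -(Ring.inverse (1 - X * A) * X)) :
    (0 ∈ G) ∧
    (∀ X Y, X ∈ G → Y ∈ G → m X Y ∈ G) ∧
    (∀ X, X ∈ G → j X ∈ G) ∧
    (∀ X Y Z : 𝒜, m (m X Y) Z = m X (m Y Z)) ∧
    (∀ X : 𝒜, m X 0 = X) ∧
    (∀ X : 𝒜, m 0 X = X) ∧
    (∀ X, X ∈ G → m X (j X) = 0) ∧
    (∀ X, X ∈ G → m (j X) X = 0) := by
  obtain rfl : m = circ A := funext₂ hm
  obtain rfl : j = circInv A := funext hj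
  subst hG
  refine ⟨by simp, fun X Y hX hY => ?_, fun X hX => ?_, circ_assoc A, circ_zero A, zero_circ A,
    fun X => circ_circInv, fun X => circInv_circ⟩
  · show IsUnit _
    rw [one_sub_circ_mul]
    exact hX.mul hY
  · show IsUnit _
    rw [one_sub_circInv_mul hX]
    exact isUnit_ringInverse.mpr hX
end

section
/- Let 𝒜 be a unital associative algebra with involution * and A ∈ 𝒜 with A* = A. Then U_A := {X ∈ G_A : X* + X = X* A X} is a subgroup of the group (G_A, ∘_A), where G_A = {X : 1 − XA invertible} and X ∘_A Y = X + Y − XAY; moreover, for X ∈ G_A the condition X* + X = X*AX is equivalent to j_A(X) = X*, where j_A(X) = −(1 − XA)^{-1}X is the inverse in G_A. -/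
/-!
The product `X ∘_A Y = X + Y - X * A * Y` is associative with neutral element `0`, and
`1 - (X ∘_A Y) * A = (1 - X * A) * (1 - Y * A)`, so `G_A` is the group of `∘_A`-invertible
elements with inverse `j_A`. For Hermitian `A` the involution reverses `∘_A`, and
`X* + X = X* A X` says `X* ∘_A X = 0`: `U_A` is the unitary group of `(G_A, ∘_A, *)`.
-/

section Ring

variable {R : Type*} [Ring R] (A : R)

def circMul (X Y : R) : R := X + Y - X * A * Y

noncomputable def circInv (X : R) : R := -(Ring.inverse (1 - X * A) * X)

variable {A}

theorem circMul_eq_zero_iff {X Y : R} : circMul A X Y = 0 ↔ X + Y = X * A * Y :=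
  sub_eq_zero

@[simp]
theorem zero_circMul (X : R) : circMul A 0 X = X := by simp [circMul]

@[simp]
theorem circMul_zero (X : R) : circMul A X 0 = X := by simp [circMul]

theorem circMul_assoc (X Y Z : R) :
    circMul A (circMul A X Y) Z = circMul A X (circMul A Y Z) := by
  simp only [circMul]; noncomm_ring

theorem one_sub_circMul_mul (X Y : R) :
    1 - circMul A X Y * A = (1 - X * A) * (1 - Y * A) := by
  simp only [circMul]; noncomm_ring

theorem circMul_circInv {X : R} (hX : IsUnit (1 - X * A)) : circMul A X (circInv A X) = 0 := by
  have h : circMul A X (circInv A X) = X - (1 - X * A) * Ring.inverse (1 - X * A) * X := by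
    simp only [circMul, circInv]; noncomm_ring
  rw [h, Ring.mul_inverse_cancel _ hX, one_mul, sub_self]

theorem circInv_circMul {X : R} (hX : IsUnit (1 - X * A)) : circMul A (circInv A X) X = 0 := by
  have h : circMul A (circInv A X) X = X - Ring.inverse (1 - X * A) * ((1 - X * A) * X) := by
    simp only [circMul, circInv]; noncomm_ring
  rw [h, ← mul_assoc, Ring.inverse_mul_cancel _ hX, one_mul, sub_self]

theorem eq_circInv_of_circMul_eq_zero {X Y : R} (hX : IsUnit (1 - X * A))
    (hYX : circMul A Y X = 0) : Y = circInv A X :=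
  calc Y = circMul A Y (circMul A X (circInv A X)) := by rw [circMul_circInv hX, circMul_zero]
    _ = circInv A X := by rw [← circMul_assoc, hYX, zero_circMul]

theorem isUnit_one_sub_mul_of_circMul_eq_zero {X Y : R} (hXY : circMul A X Y = 0)
    (hYX : circMul A Y X = 0) : IsUnit (1 - X * A) :=
  (⟨1 - X * A, 1 - Y * A, by rw [← one_sub_circMul_mul, hXY, zero_mul, sub_zero],
    by rw [← one_sub_circMul_mul, hYX, zero_mul, sub_zero]⟩ : Rˣ).isUnit

end Ring

section StarRing

variable {R : Type*} [Ring R] [StarRing R] {A : R}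

theorem star_circMul (hA : IsSelfAdjoint A) (X Y : R) :
    star (circMul A X Y) = circMul A (star Y) (star X) := by
  simp only [circMul, star_sub, star_add, star_mul, hA.star_eq, mul_assoc, add_comm (star Y)]

theorem circMul_star_self_eq_zero_iff {X : R} (hX : IsUnit (1 - X * A)) :
    circMul A (star X) X = 0 ↔ circInv A X = star X :=
  ⟨fun h => (eq_circInv_of_circMul_eq_zero hX h).symm, fun h => h ▸ circInv_circMul hX⟩

variable (A)

def circUnitary : Set R := {X | IsUnit (1 - X * A) ∧ circMul A (star X) X = 0}

variable {A}

theorem zero_mem_circUnitary : (0 : R) ∈ circUnitary A := by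
  simp [circUnitary]

theorem circMul_mem_circUnitary (hA : IsSelfAdjoint A) {X Y : R} (hX : X ∈ circUnitary A)
    (hY : Y ∈ circUnitary A) : circMul A X Y ∈ circUnitary A := by
  refine ⟨one_sub_circMul_mul X Y ▸ hX.1.mul hY.1, ?_⟩
  calc circMul A (star (circMul A X Y)) (circMul A X Y)
      = circMul A (star Y) (circMul A (circMul A (star X) X) Y) := by
        rw [star_circMul hA, circMul_assoc, circMul_assoc]
    _ = 0 := by rw [hX.2, zero_circMul, hY.2]

theorem circInv_mem_circUnitary {X : R} (hX : X ∈ circUnitary A) :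
    circInv A X ∈ circUnitary A := by
  have hinv : circInv A X = star X := (circMul_star_self_eq_zero_iff hX.1).mp hX.2
  refine ⟨isUnit_one_sub_mul_of_circMul_eq_zero (circInv_circMul hX.1) (circMul_circInv hX.1), ?_⟩
  rw [hinv, star_star, ← hinv, circMul_circInv hX.1]

end StarRing

/-- For a Hermitian `A` (`τ A = A`), the set
`U_A = {X ∈ G_A : τ X + X = τ X * A * X}` is a subgroup of `(G_A, ∘_A)`, and
for `X ∈ G_A` the defining condition is equivalent to `j_A(X) = τ X`. -/
theorem UA_subgroup {𝒜 : Type*} [Ring 𝒜]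
    (τ : 𝒜 → 𝒜)
    (hadd : ∀ x y, τ (x + y) = τ x + τ y)
    (hanti : ∀ x y, τ (x * y) = τ y * τ x)
    (hinv : ∀ x, τ (τ x) = x)
    (A : 𝒜) (hA : τ A = A)
    (m : 𝒜 → 𝒜 → 𝒜) (hm : ∀ X Y, m X Y = X + Y - X * A * Y)
    (j : 𝒜 → 𝒜) (hj : ∀ X, j X = -(Ring.inverse (1 - X * A) * X))
    (P : 𝒜 → Prop)
    (hP : ∀ X, P X ↔ (IsUnit (1 - X * A) ∧ τ X + X = τ X * A * X)) :
    P 0 ∧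
    (∀ X Y, P X → P Y → P (m X Y)) ∧
    (∀ X, P X → P (j X)) ∧
    (∀ X, IsUnit (1 - X * A) → (τ X + X = τ X * A * X ↔ j X = τ X)) := by
  let _ : StarRing 𝒜 :=
    { star := τ, star_involutive := hinv, star_mul := hanti, star_add := hadd }
  have hA' : IsSelfAdjoint A := hA
  obtain rfl : m = circMul A := funext₂ hm
  obtain rfl : j = circInv A := funext hj
  obtain rfl : P = circUnitary A :=
    funext fun X => propext <| (hP X).trans (and_congr_right' circMul_eq_zero_iff.symm)
  exact ⟨zero_mem_circUnitary, fun X Y => circMul_mem_circUnitary hA',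
    fun X => circInv_mem_circUnitary,
    fun X hX => circMul_eq_zero_iff.symm.trans (circMul_star_self_eq_zero_iff hX)⟩
end

section
/- Let 𝒜 be a unital associative algebra with involution * and A ∈ 𝒜 with A* = −A. Then S_A := {X ∈ G_A : X* − X = X* A X} is a subgroup of the group (G_A, ∘_A), where G_A = {X : 1 − XA invertible} and X ∘_A Y = X + Y − XAY; for X ∈ G_A the condition X* − X = X*AX is equivalent to j_A(X) = −X*, with j_A(X) = −(1 − XA)^{-1}X. -/
/-!
With `u = 1 - X * A`, the identity `(1 - X * A) * X = X * (1 - A * X)` and Jacobson's lemma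
(`1 - A * X` is a unit along with `1 - X * A`) turn the relation `τ X * (1 - A * X) = X`, a
rearrangement of `τ X - X = τ X * A * X`, into `u⁻¹ * X = τ X`, i.e. `j X = -τ X`.
Both `X ↦ 1 - X * A` and `X ↦ 1 - A * X` carry `∘_A` to multiplication; since `τ A = -A`, the
relation then passes to `X ∘_A Y` by a ring computation. For the inverse,
`1 - j X * A = u⁻¹` and `u * j X = -X = τ (j X)`.
-/

section Ring

variable {R : Type*} [Ring R] {a b : R}

theorem IsUnit.one_sub_mul_comm (h : IsUnit (1 - a * b)) : IsUnit (1 - b * a) := by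
  have hl : Ring.inverse (1 - a * b) * (1 - a * b) = 1 := Ring.inverse_mul_cancel _ h
  have hr : (1 - a * b) * Ring.inverse (1 - a * b) = 1 := Ring.mul_inverse_cancel _ h
  refine ⟨⟨1 - b * a, 1 + b * Ring.inverse (1 - a * b) * a, ?_, ?_⟩, rfl⟩
  · calc (1 - b * a) * (1 + b * Ring.inverse (1 - a * b) * a)
          = 1 - b * a + b * ((1 - a * b) * Ring.inverse (1 - a * b)) * a := by noncomm_ring
      _ = 1 := by rw [hr, mul_one, sub_add_cancel]
  · calc (1 + b * Ring.inverse (1 - a * b) * a) * (1 - b * a)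
          = 1 - b * a + b * (Ring.inverse (1 - a * b) * (1 - a * b)) * a := by noncomm_ring
      _ = 1 := by rw [hl, mul_one, sub_add_cancel]

theorem Ring.inverse_one_sub_mul_mul_comm (h : IsUnit (1 - a * b)) :
    Ring.inverse (1 - a * b) * a = a * Ring.inverse (1 - b * a) := by
  rw [Ring.inverse_mul_eq_iff_eq_mul _ _ _ h, ← mul_assoc,
    show (1 - a * b) * a = a * (1 - b * a) by noncomm_ring,
    mul_assoc, Ring.mul_inverse_cancel _ h.one_sub_mul_comm, mul_one]

theorem sub_eq_mul_mul_iff (t : R) : t - a = t * b * a ↔ t * (1 - b * a) = a := by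
  rw [mul_sub, mul_one, ← mul_assoc, sub_eq_iff_eq_add, sub_eq_iff_eq_add, add_comm]

theorem sub_eq_mul_mul_iff_inverse_mul_eq (h : IsUnit (1 - a * b)) (t : R) :
    t - a = t * b * a ↔ Ring.inverse (1 - a * b) * a = t := by
  rw [sub_eq_mul_mul_iff, Ring.inverse_one_sub_mul_mul_comm h,
    ← Ring.eq_mul_inverse_iff_mul_eq _ _ _ h.one_sub_mul_comm, eq_comm]

theorem one_sub_neg_inverse_mul_mul (h : IsUnit (1 - a * b)) :
    1 - -(Ring.inverse (1 - a * b) * a) * b = Ring.inverse (1 - a * b) := by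
  calc 1 - -(Ring.inverse (1 - a * b) * a) * b
        = Ring.inverse (1 - a * b) * (1 - a * b) + Ring.inverse (1 - a * b) * (a * b) := by
          rw [Ring.inverse_mul_cancel _ h]; noncomm_ring
    _ = Ring.inverse (1 - a * b) := by rw [← mul_add, sub_add_cancel, mul_one]

theorem map_circ_mul_one_sub_mul_circ (τ : R → R) (hadd : ∀ x y, τ (x + y) = τ x + τ y)
    (hanti : ∀ x y, τ (x * y) = τ y * τ x) {A X Y : R} (hA : τ A = -A)
    (hX : τ X * (1 - A * X) = X) (hY : τ Y * (1 - A * Y) = Y) :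
    τ (X + Y - X * A * Y) * (1 - A * (X + Y - X * A * Y)) = X + Y - X * A * Y := by
  have hτ : τ (X + Y - X * A * Y) = τ X + τ Y + τ Y * A * τ X := by
    have hsub : ∀ x y, τ (x - y) = τ x - τ y := map_sub (AddMonoidHom.mk' τ hadd)
    rw [hsub, hadd, hanti, hanti, hA]
    noncomm_ring
  -- `(1 + A * τ X) * (1 - A * X) = 1` is the relation for `X`, multiplied by `A` on the left.
  calc τ (X + Y - X * A * Y) * (1 - A * (X + Y - X * A * Y))
        = (τ X * (1 - A * X) + τ Y * (1 - A * X + A * (τ X * (1 - A * X)))) * (1 - A * Y) := by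
          rw [hτ]; noncomm_ring
    _ = (X + τ Y) * (1 - A * Y) := by rw [hX]; noncomm_ring
    _ = X + Y - X * A * Y := by rw [add_mul, hY]; noncomm_ring

end Ring

/-- For a skew-Hermitian `A` (`τ A = -A`), the set
`S_A = {X ∈ G_A : τ X - X = τ X * A * X}` is a subgroup of `(G_A, ∘_A)`, and
for `X ∈ G_A` the defining condition is equivalent to `j_A(X) = -τ X`. -/
theorem SA_subgroup {𝒜 : Type*} [Ring 𝒜]
    (τ : 𝒜 → 𝒜)
    (hadd : ∀ x y, τ (x + y) = τ x + τ y)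
    (hanti : ∀ x y, τ (x * y) = τ y * τ x)
    (hinv : ∀ x, τ (τ x) = x)
    (A : 𝒜) (hA : τ A = -A)
    (m : 𝒜 → 𝒜 → 𝒜) (hm : ∀ X Y, m X Y = X + Y - X * A * Y)
    (j : 𝒜 → 𝒜) (hj : ∀ X, j X = -(Ring.inverse (1 - X * A) * X))
    (P : 𝒜 → Prop)
    (hP : ∀ X, P X ↔ (IsUnit (1 - X * A) ∧ τ X - X = τ X * A * X)) :
    P 0 ∧
    (∀ X Y, P X → P Y → P (m X Y)) ∧
    (∀ X, P X → P (j X)) ∧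
    (∀ X, IsUnit (1 - X * A) → (τ X - X = τ X * A * X ↔ j X = -τ X)) := by
  have hzero : τ 0 = 0 := map_zero (AddMonoidHom.mk' τ hadd)
  have hneg : ∀ x, τ (-x) = -τ x := map_neg (AddMonoidHom.mk' τ hadd)
  refine ⟨(hP 0).2 ⟨by simp, by simp [hzero]⟩, ?_, ?_, ?_⟩
  · intro X Y hX hY
    obtain ⟨hXu, hX⟩ := (hP X).1 hX
    obtain ⟨hYu, hY⟩ := (hP Y).1 hY
    rw [sub_eq_mul_mul_iff] at hX hY
    refine (hP _).2 ⟨?_, ?_⟩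
    · rw [hm, show 1 - (X + Y - X * A * Y) * A = (1 - X * A) * (1 - Y * A) by noncomm_ring]
      exact hXu.mul hYu
    · rw [hm, sub_eq_mul_mul_iff]
      exact map_circ_mul_one_sub_mul_circ τ hadd hanti hA hX hY
  · intro X hX
    obtain ⟨hXu, hX⟩ := (hP X).1 hX
    rw [sub_eq_mul_mul_iff_inverse_mul_eq hXu] at hX
    have hjA : 1 - j X * A = Ring.inverse (1 - X * A) := by
      rw [hj, one_sub_neg_inverse_mul_mul hXu]
    have hjX : j X = -τ X := by rw [hj, hX]
    have hjU : IsUnit (1 - j X * A) := hjA ▸ hXu.ringInverse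
    refine (hP _).2 ⟨hjU, ?_⟩
    rw [sub_eq_mul_mul_iff_inverse_mul_eq hjU, hjA, Ring.inverse_inverse hXu, hjX, hneg, hinv, ← hX,
      mul_neg, Ring.mul_inverse_cancel_left _ _ hXu]
  · intro X hX
    rw [hj, neg_inj, sub_eq_mul_mul_iff_inverse_mul_eq hX]
end
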